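/- arXiv:2106.08063 — 3 statements merged into one kernel-verified Lean document; each statement's English description precedes it below -/
import Mathlib

section
/- Let V be a vector space over a field and W a subspace of V. The monoid L̄(V,W) is unit-regular if and only if both of the following hold: (i) W is trivial, i.e. W = {0} or W = V; (ii) V is finite-dimensional. -/
/-!
If `0 ≠ W ≠ V`, a nonzero `f` with `range f ≤ W ≤ ker f` lies in `L̄(V, W)`, yet `f u f = 0`
for every `u` preserving `W`. If `W` is trivial, `L̄(V, W)` is all of `End V`. In finite
dimension `ker f` and a complement of `range f` have equal dimension, so `f`, restricted to a
complement of its kernel, extends to an automorphism `a` with `f = a` on that complement, and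
`f a⁻¹ f = f`. In infinite dimension `V ≃ V × V` yields `a b = 1 ≠ b a` in `End V`, which is
impossible in a unit-regular monoid.
-/

/-- An element `s` of a monoid is unit-regular if `s * u * s = s` for some unit `u`. -/
def IsUnitRegular {M : Type*} [Monoid M] (s : M) : Prop :=
  ∃ u : Mˣ, s * (↑u : M) * s = s

/-- The monoid `L̄(V, W)` of all linear self-maps of `V` leaving the subspace `W` invariant. -/
def Lbar (K V : Type*) [Field K] [AddCommGroup V] [Module K V] (W : Submodule K V) :
    Submonoid (Module.End K V) where
  carrier := {f | ∀ w ∈ W, f w ∈ W}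
  one_mem' := fun w hw => hw
  mul_mem' := fun {f g} hf hg w hw => hf _ (hg w hw)

open Module LinearMap

section Monoid

variable {M N : Type*} [Monoid M] [Monoid N]

theorem IsUnitRegular.map {s : M} (h : IsUnitRegular s) (φ : M →* N) : IsUnitRegular (φ s) := by
  obtain ⟨u, hu⟩ := h
  exact ⟨Units.map φ u, by rw [Units.coe_map, ← map_mul, ← map_mul, hu]⟩

theorem IsUnitRegular.of_eq_top {S : Submonoid M} (hS : S = ⊤) {s : S}
    (h : IsUnitRegular (s : M)) : IsUnitRegular s := by
  subst hS
  exact h.map Submonoid.topEquiv.symm.toMonoidHom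

theorem IsUnitRegular.isUnit_of_mul_eq_one {a b : M} (h : IsUnitRegular a) (hab : a * b = 1) :
    IsUnit a := by
  obtain ⟨u, hu⟩ := h
  have hau : a * u = 1 := by rw [← mul_one (a * u), ← hab, ← mul_assoc, hu, hab]
  exact ⟨u⁻¹, (Units.eq_inv_of_mul_eq_one_right hau).symm⟩

theorem isDedekindFiniteMonoid_of_forall_isUnitRegular (h : ∀ a : M, IsUnitRegular a) :
    IsDedekindFiniteMonoid M where
  mul_eq_one_symm {a b} hab := by
    obtain ⟨u, rfl⟩ := (h a).isUnit_of_mul_eq_one hab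
    rw [(Units.mul_eq_one_iff_inv_eq.mp hab).symm, Units.inv_mul]

end Monoid

section Ring

variable {R M : Type*} [Ring R] [AddCommGroup M] [Module R M]

/-- The unit maps `range f` onto `C` by the inverse of `f|_C`, and `D` onto `ker f` by `θ`. -/
theorem LinearMap.isUnitRegular_of_isCompl {f : Module.End R M} {C D : Submodule R M}
    (hC : IsCompl C (ker f)) (hD : IsCompl (range f) D) (θ : D ≃ₗ[R] ker f) :
    IsUnitRegular f := by
  let ψ : C ≃ₗ[R] range f :=
    (Submodule.quotientEquivOfIsCompl _ _ hC.symm).symm ≪≫ₗ f.quotKerEquivRange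
  let e : M ≃ₗ[R] M := (Submodule.prodEquivOfIsCompl _ _ hD).symm ≪≫ₗ
    ψ.symm.prodCongr θ ≪≫ₗ Submodule.prodEquivOfIsCompl _ _ hC
  refine ⟨GeneralLinearGroup.ofLinearEquiv e, LinearMap.ext fun x => ?_⟩
  have hψ (c : C) : f c = ψ c := by simp [ψ]
  have he : e (f x) = ψ.symm ⟨f x, mem_range_self f x⟩ := by
    simp [e, Submodule.prodEquivOfIsCompl_symm_apply_left _ _ hD ⟨f x, _⟩]
  simp [he, hψ]

end Ring

section DivisionRing

variable {K V : Type*} [DivisionRing K] [AddCommGroup V] [Module K V]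

theorem Module.End.isUnitRegular [FiniteDimensional K V] (f : Module.End K V) :
    IsUnitRegular f := by
  obtain ⟨C, hC⟩ := (ker f).exists_isCompl
  obtain ⟨D, hD⟩ := (range f).exists_isCompl
  have hdim : finrank K D = finrank K (ker f) := by
    have := Submodule.finrank_add_eq_of_isCompl hC
    have := Submodule.finrank_add_eq_of_isCompl hD
    have := f.finrank_range_add_finrank_ker
    omega
  exact f.isUnitRegular_of_isCompl hC.symm hD (.ofFinrankEq _ _ hdim)

/-- In infinite dimension `e : V × V ≃ V` exists, and `e ∘ inl` has the left inverse
`fst ∘ e⁻¹` but is not surjective. -/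
theorem FiniteDimensional.of_isDedekindFiniteMonoid_end
    [IsDedekindFiniteMonoid (Module.End K V)] : FiniteDimensional K V := by
  by_contra hinf
  have hrank : Cardinal.aleph0 ≤ Module.rank K V := by
    rwa [← not_lt, Module.rank_lt_aleph0_iff]
  obtain ⟨e⟩ := nonempty_linearEquiv_of_rank_eq (R := K) (M := V × V) (M₁ := V)
    (by rw [rank_prod', Cardinal.add_eq_self hrank])
  have hsection : (fst K V V ∘ₗ e.symm.toLinearMap) * (e.toLinearMap ∘ₗ inl K V V) = 1 := by
    ext x; simp
  have hretract := mul_eq_one_symm hsection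
  have hzero (v : V) : v = 0 := by
    simpa using (congrArg (· (e (0, v))) hretract).symm
  have : Subsingleton V := ⟨fun v w => (hzero v).trans (hzero w).symm⟩
  exact hinf inferInstance

theorem Submodule.exists_ne_zero_range_le_le_ker {W : Submodule K V} (hbot : W ≠ ⊥)
    (htop : W ≠ ⊤) : ∃ f : Module.End K V, f ≠ 0 ∧ range f ≤ W ∧ W ≤ ker f := by
  obtain ⟨w, hwW, hw⟩ := W.exists_mem_ne_zero_of_ne_bot hbot
  obtain ⟨φ, hφ, hφW⟩ := W.exists_dual_map_eq_bot_of_lt_top htop.lt_top inferInstance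
  obtain ⟨v, hv⟩ : ∃ v, φ v ≠ 0 := by
    by_contra! h
    exact hφ (LinearMap.ext h)
  refine ⟨φ.smulRight w, fun h => ?_, ?_, ?_⟩
  · simpa [hv, hw] using congrArg (· v) h
  · rintro _ ⟨x, rfl⟩
    exact W.smul_mem _ hwW
  · intro x hx
    have : φ x = 0 := (Submodule.mem_bot K).mp (hφW ▸ Submodule.mem_map_of_mem hx)
    simp [this]

end DivisionRing

section Lbar

variable {K V : Type*} [Field K] [AddCommGroup V] [Module K V] {W : Submodule K V}

theorem Lbar_eq_top (hW : W = ⊥ ∨ W = ⊤) : Lbar K V W = ⊤ := by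
  refine eq_top_iff.mpr fun f _ w hw => ?_
  rcases hW with rfl | rfl
  · rw [(Submodule.mem_bot K).mp hw, map_zero]
    exact zero_mem _
  · trivial

theorem not_isUnitRegular_of_range_le_le_ker {f : Module.End K V} (hf : f ∈ Lbar K V W)
    (hf₀ : f ≠ 0) (hrange : range f ≤ W) (hker : W ≤ ker f) :
    ¬ IsUnitRegular (⟨f, hf⟩ : Lbar K V W) := by
  rintro ⟨u, hu⟩
  refine hf₀ (LinearMap.ext fun x => ?_)
  have hfuf : f (((u : Lbar K V W) : Module.End K V) (f x)) = f x :=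
    congrArg (fun g : Lbar K V W => (g : Module.End K V) x) hu
  rw [← hfuf]
  exact hker ((u : Lbar K V W).2 _ (hrange (mem_range_self _ x)))

theorem eq_bot_or_eq_top_of_forall_isUnitRegular (H : ∀ f : Lbar K V W, IsUnitRegular f) :
    W = ⊥ ∨ W = ⊤ := by
  by_contra! hW
  obtain ⟨f, hf₀, hrange, hker⟩ := W.exists_ne_zero_range_le_le_ker hW.1 hW.2
  exact not_isUnitRegular_of_range_le_le_ker (fun w _ => hrange (mem_range_self f w))
    hf₀ hrange hker (H _)

end Lbar

theorem stmt13 {K V : Type*} [Field K] [AddCommGroup V] [Module K V]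
    (W : Submodule K V) :
    (∀ f : Lbar K V W, IsUnitRegular f) ↔
      ((W = ⊥ ∨ W = ⊤) ∧ FiniteDimensional K V) := by
  constructor
  · intro H
    have hW := eq_bot_or_eq_top_of_forall_isUnitRegular H
    have : IsDedekindFiniteMonoid (Module.End K V) :=
      isDedekindFiniteMonoid_of_forall_isUnitRegular fun f =>
        (H ⟨f, by simp [Lbar_eq_top hW]⟩).map (Lbar K V W).subtype
    exact ⟨hW, .of_isDedekindFiniteMonoid_end⟩
  · rintro ⟨hW, _⟩ f
    exact .of_eq_top (Lbar_eq_top hW) (Module.End.isUnitRegular _)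
end

section
/- Let X be a nonempty set and Y a nonempty subset of X. Every element of the monoid T̄(X,Y) is semi-balanced if and only if X is finite. -/
/-- `T` is a transversal of the equivalence relation `ker f = {(x,y) : f x = f y}`:
it contains exactly one element of each `ker f`-class. -/
def IsTransversal {X : Type*} (f : X → X) (T : Set X) : Prop :=
  ∀ x : X, ∃! t, t ∈ T ∧ f t = f x

/-- `f` is semi-balanced if its collapse `c(f) = |X \ T|` (for a transversal `T` of `ker f`)
equals its defect `d(f) = |X \ f(X)|`. -/
def SemiBalanced {X : Type*} (f : X → X) : Prop :=
  ∃ T : Set X, IsTransversal f T ∧ Cardinal.mk ↥(Tᶜ) = Cardinal.mk ↥((Set.range f)ᶜ)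

/-!
A transversal `T` of `ker f` is mapped bijectively onto `f(X)` by `f`, so on a finite set
`|X \ T| = |X \ f(X)|` for every `f`. Conversely, if `X` is infinite then `Y` or `X \ Y` contains
an infinite set `S`, and `S ≃ Option S` yields a surjective, non-injective self-map of `S`;
extended by the identity it lies in `T̄(X,Y)`. Surjectivity makes its defect `0`, while a
collapse `0` would force a transversal to be all of `X`, i.e. injectivity.
-/

open Cardinal

section Transversal

variable {X : Type*} {f : X → X} {T : Set X}

theorem IsTransversal.bijOn (hT : IsTransversal f T) : Set.BijOn f T (Set.range f) := by
  refine ⟨fun t _ => ⟨t, rfl⟩, fun t₁ h₁ t₂ h₂ hf => ?_, ?_⟩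
  · exact (hT t₂).unique ⟨h₁, hf⟩ ⟨h₂, rfl⟩
  · rintro _ ⟨x, rfl⟩
    obtain ⟨t, ⟨ht, hft⟩, -⟩ := hT x
    exact ⟨t, ht, hft⟩

theorem IsTransversal.mk_eq_mk_range (hT : IsTransversal f T) : #T = #(Set.range f) :=
  mk_congr hT.bijOn.equiv

end Transversal

theorem exists_isTransversal {X : Type*} (f : X → X) : ∃ T, IsTransversal f T := by
  have hsurj := Set.rangeFactorization_surjective (f := f)
  set s := Function.surjInv hsurj
  have hs : ∀ y, f (s y) = y := fun y => congrArg Subtype.val (Function.surjInv_eq hsurj y)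
  refine ⟨Set.range s, fun x => ⟨s (Set.rangeFactorization f x), ⟨⟨_, rfl⟩, hs _⟩, ?_⟩⟩
  rintro _ ⟨⟨y, rfl⟩, hy⟩
  exact congrArg s (Subtype.ext ((hs y).symm.trans hy))

theorem semiBalanced_of_finite {X : Type*} [Finite X] (f : X → X) : SemiBalanced f := by
  obtain ⟨T, hT⟩ := exists_isTransversal f
  exact ⟨T, hT, mk_compl_eq_mk_compl_finite_same hT.mk_eq_mk_range⟩

theorem SemiBalanced.injective_of_surjective {X : Type*} {f : X → X} (hf : SemiBalanced f)
    (hsurj : Function.Surjective f) : Function.Injective f := by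
  obtain ⟨T, hT, hcard⟩ := hf
  rw [Set.range_eq_univ.2 hsurj, Set.compl_univ, mk_eq_zero ↥(∅ : Set X), mk_eq_zero_iff,
    Set.isEmpty_coe_sort, Set.compl_empty_iff] at hcard
  subst hcard
  exact Set.injOn_univ.1 hT.bijOn.injOn

theorem exists_surjective_not_injective (α : Type*) [Infinite α] :
    ∃ g : α → α, Function.Surjective g ∧ ¬ Function.Injective g := by
  obtain ⟨e⟩ : Nonempty (α ≃ Option α) := Cardinal.eq.1 <| by
    rw [mk_option, add_one_eq (infinite_iff.1 ‹_›)]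
  obtain ⟨a⟩ := ‹Infinite α›.nonempty
  refine ⟨fun x => (e x).getD a, fun y => ⟨e.symm (some y), by simp⟩, fun hg => ?_⟩
  have : e.symm none = e.symm (some a) := hg (by simp)
  simp at this

theorem Set.Infinite.exists_surjective_not_injective_mapsTo_eqOn_compl {X : Type*} {S : Set X}
    (hS : S.Infinite) : ∃ f : X → X, Function.Surjective f ∧ ¬ Function.Injective f ∧
      Set.MapsTo f S S ∧ Set.EqOn f id Sᶜ := by
  classical
  have : Infinite S := hS.to_subtype
  obtain ⟨g, hgs, hgi⟩ := exists_surjective_not_injective S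
  let f : X → X := fun x => if h : x ∈ S then g ⟨x, h⟩ else x
  have hf : ∀ s : S, f s = g s := fun s => dif_pos s.2
  refine ⟨f, fun y => ?_, fun hfi => hgi fun s t hst => ?_, fun x hx => ?_, fun x hx => dif_neg hx⟩
  · by_cases hy : y ∈ S
    · obtain ⟨s, hs⟩ := hgs ⟨y, hy⟩
      exact ⟨s, by rw [hf, hs]⟩
    · exact ⟨y, dif_neg hy⟩
  · exact Subtype.ext (hfi (by rw [hf, hf, hst]))
  · simp [f, hx]

theorem stmt17_general {X : Type*} (Y : Set X) :
    (∀ f : X → X, (∀ x ∈ Y, f x ∈ Y) → SemiBalanced f) ↔ Finite X := by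
  refine ⟨fun hall => ?_, fun _ f _ => semiBalanced_of_finite f⟩
  by_contra hfin
  obtain ⟨S, hS, hSY⟩ : ∃ S : Set X, S.Infinite ∧ (S = Y ∨ S = Yᶜ) := by
    have : (Y ∪ Yᶜ).Infinite := by
      rw [Set.union_compl_self, Set.infinite_univ_iff]
      exact not_finite_iff_infinite.1 hfin
    rcases Set.infinite_union.1 this with h | h
    exacts [⟨Y, h, .inl rfl⟩, ⟨Yᶜ, h, .inr rfl⟩]
  obtain ⟨f, hsurj, hinj, hmaps, hid⟩ := hS.exists_surjective_not_injective_mapsTo_eqOn_compl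
  refine hinj ((hall f fun x hx => ?_).injective_of_surjective hsurj)
  rcases hSY with rfl | rfl
  · exact hmaps hx
  · rw [hid (by simpa using hx)]
    exact hx

theorem stmt17 {X : Type*} [Nonempty X] (Y : Set X) (hY : Y.Nonempty) :
    (∀ f : X → X, (∀ x ∈ Y, f x ∈ Y) → SemiBalanced f) ↔ Finite X :=
  stmt17_general Y
end

section
/- Let V be a vector space over a field and W a subspace of V. Every element of L̄(V,W) is semi-balanced (as a function on the underlying set of V) if and only if V is finite-dimensional. -/
open Function Submodule

theorem IsTransversal.eq_univ_of_injective {X : Type*} {f : X → X} {T : Set X}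
    (hT : IsTransversal f T) (hf : Injective f) : T = Set.univ :=
  Set.eq_univ_of_forall fun x => by
    obtain ⟨t, ⟨ht, hft⟩, -⟩ := hT x
    rwa [← hf hft]

theorem not_semiBalanced_of_injective_of_not_surjective {X : Type*} {f : X → X}
    (hf : Injective f) (hf' : ¬ Surjective f) : ¬ SemiBalanced f := by
  rintro ⟨T, hT, hcard⟩
  rw [hT.eq_univ_of_injective hf, Set.compl_univ, Cardinal.mk_eq_zero, eq_comm,
    Cardinal.mk_set_eq_zero_iff, Set.compl_empty_iff, Set.range_eq_univ] at hcard
  exact hf' hcard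

section

variable {K V : Type*} [Field K] [AddCommGroup V] [Module K V]

theorem LinearMap.isTransversal_of_isCompl_ker (f : V →ₗ[K] V) {C : Submodule K V}
    (hC : IsCompl C (ker f)) : IsTransversal f C := by
  intro x
  have hfx : f (C.projection (ker f) hC x) = f x := by
    have := sub_projection_mem hC x
    rw [mem_ker, map_sub, sub_eq_zero] at this
    exact this.symm
  refine ⟨C.projection (ker f) hC x, ⟨projection_apply_mem hC x, hfx⟩,
    fun t ⟨ht, hft⟩ => ?_⟩
  have hdiff : t - C.projection (ker f) hC x ∈ C ⊓ ker f :=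
    ⟨sub_mem ht (projection_apply_mem hC x), by simp [hft, hfx]⟩
  rwa [hC.inf_eq_bot, mem_bot, sub_eq_zero] at hdiff

theorem exists_linearEquiv_map_eq_of_finrank_eq [FiniteDimensional K V] {C D : Submodule K V}
    (h : Module.finrank K C = Module.finrank K D) :
    ∃ g : V ≃ₗ[K] V, C.map (g : V →ₗ[K] V) = D := by
  obtain ⟨C', hC⟩ := C.exists_isCompl
  obtain ⟨D', hD⟩ := D.exists_isCompl
  have h' : Module.finrank K C' = Module.finrank K D' := by
    have := finrank_add_eq_of_isCompl hC
    have := finrank_add_eq_of_isCompl hD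
    omega
  let e := LinearEquiv.ofFinrankEq C D h
  let g := (prodEquivOfIsCompl C C' hC).symm ≪≫ₗ
    (e.prodCongr (LinearEquiv.ofFinrankEq C' D' h')) ≪≫ₗ prodEquivOfIsCompl D D' hD
  have hg : ∀ c : C, g c = e c := fun c => by simp [g]
  refine ⟨g, le_antisymm ?_ fun y hy => ?_⟩
  · rintro _ ⟨x, hx, rfl⟩
    simpa only [LinearEquiv.coe_coe, hg ⟨x, hx⟩] using (e ⟨x, hx⟩).2
  · exact ⟨e.symm ⟨y, hy⟩, (e.symm ⟨y, hy⟩).2, by simp [hg]⟩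

theorem LinearMap.semiBalanced [FiniteDimensional K V] (f : V →ₗ[K] V) :
    SemiBalanced (f : V → V) := by
  obtain ⟨C, hC⟩ := (ker f).exists_isCompl
  have hrank : Module.finrank K C = Module.finrank K (range f) := by
    have := finrank_add_eq_of_isCompl hC
    have := f.finrank_range_add_finrank_ker
    omega
  obtain ⟨g, hg⟩ := exists_linearEquiv_map_eq_of_finrank_eq hrank
  refine ⟨C, f.isTransversal_of_isCompl_ker hC.symm, ?_⟩
  rw [← coe_range, ← hg, map_coe, LinearEquiv.coe_coe, ← LinearEquiv.coe_toEquiv,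
    ← Equiv.image_compl, Cardinal.mk_image_eq g.toEquiv.injective]

theorem exists_injective_not_surjective_of_not_finiteDimensional
    (hV : ¬ FiniteDimensional K V) : ∃ h : V →ₗ[K] V, Injective h ∧ ¬ Surjective h := by
  have hinf : Cardinal.aleph0 ≤ Module.rank K V :=
    not_lt.mp (mt Module.rank_lt_aleph0_iff.mp hV)
  obtain ⟨e⟩ : Nonempty ((V × K) ≃ₗ[K] V) := by
    apply nonempty_linearEquiv_of_lift_rank_eq
    simp [rank_prod, Cardinal.add_one_eq (Cardinal.aleph0_le_lift.mpr hinf)]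
  refine ⟨e.toLinearMap ∘ₗ LinearMap.inl K V K, e.injective.comp LinearMap.inl_injective,
    fun hsurj => ?_⟩
  obtain ⟨x, hx⟩ := hsurj (e (0, 1))
  simpa using e.injective hx

theorem exists_mapsTo_injective_not_surjective (W : Submodule K V)
    (hV : ¬ FiniteDimensional K V) :
    ∃ f : V →ₗ[K] V, (∀ w ∈ W, f w ∈ W) ∧ Injective f ∧ ¬ Surjective f := by
  obtain ⟨U, hWU⟩ := W.exists_isCompl
  let e := prodEquivOfIsCompl W U hWU
  suffices ∃ (a : Module.End K W) (b : Module.End K U),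
      Injective a ∧ Injective b ∧ ¬ Surjective (Prod.map a b) by
    obtain ⟨a, b, ha, hb, hab⟩ := this
    have hconj : ⇑(e.conj (a.prodMap b)) = e ∘ Prod.map a b ∘ e.symm := by
      ext x; rfl
    refine ⟨e.conj (a.prodMap b), fun w hw => ?_, ?_, ?_⟩
    · simp [hconj, e, prodEquivOfIsCompl_symm_apply_left W U hWU ⟨w, hw⟩]
    · rw [hconj, EquivLike.comp_injective, EquivLike.injective_comp]
      exact ha.prodMap hb
    · rwa [hconj, EquivLike.comp_surjective, EquivLike.surjective_comp]
  have hsummand : ¬ FiniteDimensional K W ∨ ¬ FiniteDimensional K U := by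
    contrapose! hV
    obtain ⟨_, _⟩ := hV
    exact Module.Finite.equiv e
  rcases hsummand with hW | hU
  · obtain ⟨a, ha, ha'⟩ := exists_injective_not_surjective_of_not_finiteDimensional hW
    exact ⟨a, LinearMap.id, ha, injective_id, by rw [Prod.map_surjective]; tauto⟩
  · obtain ⟨b, hb, hb'⟩ := exists_injective_not_surjective_of_not_finiteDimensional hU
    exact ⟨LinearMap.id, b, injective_id, hb, by rw [Prod.map_surjective]; tauto⟩

end

theorem stmt19 {K V : Type*} [Field K] [AddCommGroup V] [Module K V]
    (W : Submodule K V) :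
    (∀ f : V →ₗ[K] V, (∀ w ∈ W, f w ∈ W) → SemiBalanced (f : V → V)) ↔
      FiniteDimensional K V := by
  refine ⟨fun hall => ?_, fun _ f _ => f.semiBalanced⟩
  by_contra hV
  obtain ⟨f, hfW, hinj, hsurj⟩ := exists_mapsTo_injective_not_surjective W hV
  exact not_semiBalanced_of_injective_of_not_surjective hinj hsurj (hall f hfW)
end
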